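/- arXiv:0905.3514 — 5 statements merged into one kernel-verified Lean document; each statement's English description precedes it below -/
import Mathlib

section
/- Let K and L be nonempty compact convex sets in ℝⁿ, and let 1 ≤ d ≤ n. Then the following are equivalent: (i) for every polytope Q ⊆ K having at most d+1 vertices (i.e., Q is the convex hull of at most d+1 points of K), there exists v ∈ ℝⁿ such that Q + v ⊆ L; (ii) for every d-dimensional linear subspace ξ of ℝⁿ, there exists v ∈ ξ such that K_ξ + v ⊆ L_ξ, where K_ξ and L_ξ denote the orthogonal projections of K and L onto ξ. -/
/-!
(i) ⇒ (ii): for `k ∈ K` the set of `w ∈ ξ` with `P k + w ∈ P L` (`P` the projection onto `ξ`)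
is compact and convex, and (i) says that any `d + 1` of these sets meet, so by Helly's theorem
in the `d`-dimensional space `ξ` they all do.

(ii) ⇒ (i): it suffices to translate the vertices `p i` of the polytope into `L`. If that is
impossible, separating `∏ i, (L - p i)` from the diagonal gives vectors `u i` with `∑ u i = 0`
and `∑ ⟪u i, l i - p i⟫ < 0` whenever all `l i ∈ L`. Since they sum to zero, the `u i` span
at most `d` dimensions, hence lie in some `d`-dimensional `ξ`. Taking `v` from (ii) and
`l i ∈ L` with `P l i = P p i + v`, the sum becomes `⟪∑ u i, v⟫ = 0`, a contradiction.
-/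

open Set

/-- The orthogonal projection of `ℝⁿ` onto a subspace `ξ`, viewed as a map `ℝⁿ → ℝⁿ`. -/
noncomputable def projSub {n : ℕ} (ξ : Submodule ℝ (EuclideanSpace ℝ (Fin n)))
    (x : EuclideanSpace ℝ (Fin n)) : EuclideanSpace ℝ (Fin n) :=
  (ξ.orthogonalProjectionOnto x : EuclideanSpace ℝ (Fin n))

/-- The orthogonal projection of `ℝⁿ` onto the hyperplane `u^⊥`. -/
noncomputable def projHyp {n : ℕ} (u : EuclideanSpace ℝ (Fin n)) :
    EuclideanSpace ℝ (Fin n) → EuclideanSpace ℝ (Fin n) :=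
  projSub ((Submodule.span ℝ {u})ᗮ)

/-- `IsSimplex n Δ` : `Δ` is an `n`-simplex in `ℝⁿ`, i.e. the convex hull of
`n+1` affinely independent points. -/
def IsSimplex (n : ℕ) (Δ : Set (EuclideanSpace ℝ (Fin n))) : Prop :=
  ∃ p : Fin (n + 1) → EuclideanSpace ℝ (Fin n),
    AffineIndependent ℝ p ∧ Δ = convexHull ℝ (Set.range p)

open Module RealInnerProductSpace

theorem image_add_convexHull_subset_iff {E : Type*} [AddCommGroup E] [Module ℝ E]
    {s L : Set E} (hL : Convex ℝ L) (v : E) :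
    (· + v) '' convexHull ℝ s ⊆ L ↔ ∀ q ∈ s, q + v ∈ L := by
  rw [image_subset_iff]
  exact ⟨fun h q hq => h (subset_convexHull ℝ s hq),
    fun h => convexHull_min h (hL.translate_preimage_left v)⟩

theorem Submodule.exists_le_finrank_eq {K V : Type*} [DivisionRing K] [AddCommGroup V]
    [Module K V] [Module.Finite K V] (W : Submodule K V) {d : ℕ} (hWd : finrank K W ≤ d)
    (hdV : d ≤ finrank K V) : ∃ ξ : Submodule K V, W ≤ ξ ∧ finrank K ξ = d := by
  obtain ⟨m, hm⟩ := Nat.exists_eq_add_of_le hWd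
  induction m generalizing W with
  | zero => exact ⟨W, le_rfl, hm.symm⟩
  | succ m ih =>
    obtain ⟨v, -, hv⟩ :=
      SetLike.exists_of_lt (Submodule.lt_top_of_finrank_lt_finrank (s := W) (by omega))
    have hrank := finrank_sup_span_singleton hv
    obtain ⟨ξ, hle, hξ⟩ := ih (W ⊔ span K {v}) (by omega) (by omega)
    exact ⟨ξ, le_sup_left.trans hle, hξ⟩

theorem finrank_span_range_lt_card_of_sum_eq_zero {K V ι : Type*} [DivisionRing K]
    [AddCommGroup V] [Module K V] [Fintype ι] [Nonempty ι] {u : ι → V} (hu : ∑ i, u i = 0) :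
    finrank K (Submodule.span K (range u)) < Fintype.card ι := by
  set φ := Fintype.linearCombination K u
  have hker : LinearMap.ker φ ≠ ⊥ := (Submodule.ne_bot_iff _).2
    ⟨1, by simp [φ, Fintype.linearCombination_apply, hu], one_ne_zero⟩
  have hrank := φ.finrank_range_add_finrank_ker
  rw [Fintype.range_linearCombination, Module.finrank_fintype_fun_eq_card] at hrank
  have := Submodule.finrank_eq_zero.not.2 hker
  omega

theorem exists_add_mem_image_of_forall_finset {E F : Type*} [NormedAddCommGroup E]
    [NormedSpace ℝ E] [NormedAddCommGroup F] [NormedSpace ℝ F] [FiniteDimensional ℝ F]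
    (P : E →L[ℝ] F) {K L : Set E} (hLcp : IsCompact L) (hLcv : Convex ℝ L)
    (h : ∀ s : Finset E, s.card ≤ finrank ℝ F + 1 → ↑s ⊆ K → ∃ v, ∀ q ∈ s, q + v ∈ L) :
    ∃ w : F, ∀ k ∈ K, P k + w ∈ P '' L := by
  have hinter (I : Finset K) (hI : I.card ≤ finrank ℝ F + 1) :
      (⋂ k ∈ I, (P k + ·) ⁻¹' (P '' L)).Nonempty := by
    obtain ⟨v, hv⟩ := h (I.map (Function.Embedding.subtype _)) (by simpa using hI)
      fun _ hx => by obtain ⟨k, -, rfl⟩ := Finset.mem_map.1 hx; exact k.2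
    exact ⟨P v, mem_iInter₂.2 fun k hk => ⟨k + v, hv k (by simpa using hk), map_add P _ _⟩⟩
  obtain ⟨w, hw⟩ := Convex.helly_theorem_compact' (F := fun k : K => (P k + ·) ⁻¹' (P '' L))
    (fun k => (hLcv.linear_image (P : E →ₗ[ℝ] F)).translate_preimage_right _)
    (fun k => (Homeomorph.addLeft _).isCompact_preimage.2 (hLcp.image P.continuous)) hinter
  exact ⟨w, fun k hk => mem_iInter.1 hw ⟨k, hk⟩⟩

theorem StrongDual.exists_apply_eq_sum_inner_pi {E ι : Type*} [NormedAddCommGroup E] [InnerProductSpace ℝ E]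
    [CompleteSpace E] [Fintype ι] (f : StrongDual ℝ (ι → E)) :
    ∃ u : ι → E, ∀ g, f g = ∑ i, ⟪u i, g i⟫ := by
  classical
  refine ⟨fun i => (InnerProductSpace.toDual ℝ E).symm
    (f ∘L ContinuousLinearMap.single ℝ (fun _ => E) i), fun g => ?_⟩
  simp only [InnerProductSpace.toDual_symm_apply, ContinuousLinearMap.comp_apply,
    ContinuousLinearMap.single_apply]
  conv_lhs => rw [← Finset.univ_sum_single g]
  exact map_sum f _ _

-- Hahn–Banach between the compact box `∏ i, (L - p i)` and the diagonal of `ι → E`.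
theorem exists_sum_eq_zero_sum_inner_neg {E ι : Type*} [NormedAddCommGroup E]
    [InnerProductSpace ℝ E] [FiniteDimensional ℝ E] [Fintype ι] {L : Set E}
    (hLcp : IsCompact L) (hLcv : Convex ℝ L) (p : ι → E) (hp : ∀ v, ∃ i, p i + v ∉ L) :
    ∃ u : ι → E, ∑ i, u i = 0 ∧ ∀ g : ι → E, (∀ i, p i + g i ∈ L) → ∑ i, ⟪u i, g i⟫ < 0 := by
  set δ : E →ₗ[ℝ] ι → E := LinearMap.const
  set Δ := LinearMap.range δ
  have hdisj : Disjoint (univ.pi fun i => (p i + ·) ⁻¹' L) (Δ : Set (ι → E)) := by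
    refine disjoint_left.2 fun g hg ⟨v, hv⟩ => ?_
    obtain ⟨i, hi⟩ := hp v
    exact hi (by simpa [← hv, δ] using hg i (mem_univ i))
  obtain ⟨f, a, b, hfD, hab, hfΔ⟩ := geometric_hahn_banach_compact_closed
    (convex_pi fun i _ => hLcv.translate_preimage_right (p i))
    (isCompact_univ_pi fun i => (Homeomorph.addLeft (p i)).isCompact_preimage.2 hLcp)
    Δ.convex Δ.closed_of_finiteDimensional hdisj
  have hfΔ0 (v : E) : f (δ v) = 0 := by
    by_contra hv
    have := hfΔ _ ⟨((b - 1) / f (δ v)) • v, rfl⟩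
    rw [map_smul, map_smul, smul_eq_mul, div_mul_cancel₀ _ hv] at this
    linarith
  obtain ⟨u, hu⟩ := StrongDual.exists_apply_eq_sum_inner_pi f
  refine ⟨u, ?_, fun g hg => ?_⟩
  · refine ext_inner_left ℝ fun v => ?_
    simpa [inner_sum, real_inner_comm, hu, δ] using hfΔ0 v
  · have hb : b < 0 := by simpa using hfΔ 0 Δ.zero_mem
    rw [← hu]
    linarith [hfD g fun i _ => hg i]

theorem exists_forall_add_mem_of_forall_starProjection {E ι : Type*} [NormedAddCommGroup E]
    [InnerProductSpace ℝ E] [FiniteDimensional ℝ E] [Fintype ι] {L : Set E}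
    (hLcp : IsCompact L) (hLcv : Convex ℝ L) (p : ι → E) {d : ℕ}
    (hcard : Fintype.card ι ≤ d + 1) (hd : d ≤ finrank ℝ E)
    (h : ∀ ξ : Submodule ℝ E, finrank ℝ ξ = d →
      ∃ v ∈ ξ, ∀ i, ξ.starProjection (p i) + v ∈ ξ.starProjection '' L) :
    ∃ v, ∀ i, p i + v ∈ L := by
  by_contra! hp
  have : Nonempty ι := let ⟨i, _⟩ := hp 0; ⟨i⟩
  obtain ⟨u, hu0, hneg⟩ := exists_sum_eq_zero_sum_inner_neg hLcp hLcv p hp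
  obtain ⟨ξ, huξ, hξ⟩ := (Submodule.span ℝ (range u)).exists_le_finrank_eq
    (by have := finrank_span_range_lt_card_of_sum_eq_zero (K := ℝ) hu0; omega) hd
  obtain ⟨v, -, hv⟩ := h ξ hξ
  choose l hlL hl using hv
  have hinner (i : ι) (x : E) : ⟪u i, ξ.starProjection x⟫ = ⟪u i, x⟫ := by
    rw [← ξ.inner_starProjection_left_eq_right, Submodule.starProjection_eq_self_iff.2
      (huξ (Submodule.subset_span (mem_range_self i)))]
  have hzero : ∑ i, ⟪u i, l i - p i⟫ = 0 := calc
    _ = ∑ i, ⟪u i, ξ.starProjection (l i) - ξ.starProjection (p i)⟫ := by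
      simp_rw [inner_sub_right, hinner]
    _ = ∑ i, ⟪u i, v⟫ := by simp_rw [hl, add_sub_cancel_left]
    _ = 0 := by rw [← sum_inner, hu0, inner_zero_left]
  exact (hneg (l - p) fun i => by simpa using hlL i).ne hzero

theorem stmt_3_general {n : ℕ} (d : ℕ) (hdn : d ≤ n)
    (K L : Set (EuclideanSpace ℝ (Fin n)))
    (hLcp : IsCompact L) (hLcv : Convex ℝ L) :
    (∀ Q : Set (EuclideanSpace ℝ (Fin n)),
      (∃ s : Finset (EuclideanSpace ℝ (Fin n)), s.card ≤ d + 1 ∧ ↑s ⊆ K ∧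
        Q = convexHull ℝ (↑s : Set (EuclideanSpace ℝ (Fin n)))) →
      ∃ v : EuclideanSpace ℝ (Fin n), (fun x => x + v) '' Q ⊆ L) ↔
    (∀ ξ : Submodule ℝ (EuclideanSpace ℝ (Fin n)), Module.finrank ℝ ξ = d →
      ∃ v ∈ ξ, (fun x => x + v) '' (projSub ξ '' K) ⊆ projSub ξ '' L) := by
  constructor
  · intro h ξ hξ
    obtain ⟨w, hw⟩ := exists_add_mem_image_of_forall_finset ξ.orthogonalProjectionOnto hLcp hLcv
      fun s hs hsK => (h _ ⟨s, hξ ▸ hs, hsK, rfl⟩).imp fun v hv =>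
        (image_add_convexHull_subset_iff hLcv v).1 hv
    refine ⟨w, w.2, ?_⟩
    rintro _ ⟨_, ⟨k, hk, rfl⟩, rfl⟩
    obtain ⟨l, hl, hlk⟩ := hw k hk
    exact ⟨l, hl, congrArg Subtype.val hlk⟩
  · rintro h _ ⟨s, hs, hsK, rfl⟩
    have hproj (ξ : Submodule ℝ (EuclideanSpace ℝ (Fin n))) (hξ : finrank ℝ ξ = d) :
        ∃ v ∈ ξ, ∀ q : s, ξ.starProjection q + v ∈ ξ.starProjection '' L :=
      (h ξ hξ).imp fun v ⟨hvξ, hv⟩ => ⟨hvξ, fun q => hv ⟨_, ⟨q, hsK q.2, rfl⟩, rfl⟩⟩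
    obtain ⟨v, hv⟩ := exists_forall_add_mem_of_forall_starProjection hLcp hLcv
      ((↑) : s → EuclideanSpace ℝ (Fin n)) (by simpa using hs) (by simpa using hdn) hproj
    exact ⟨v, (image_add_convexHull_subset_iff hLcv v).2 fun q hq => hv ⟨q, hq⟩⟩

/-- **Generalized Inscribed Polytope Containment Theorem.** -/
theorem stmt_3 {n : ℕ} (hn : 1 ≤ n) (d : ℕ) (hd1 : 1 ≤ d) (hdn : d ≤ n)
    (K L : Set (EuclideanSpace ℝ (Fin n)))
    (hKne : K.Nonempty) (hKcp : IsCompact K) (hKcv : Convex ℝ K)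
    (hLne : L.Nonempty) (hLcp : IsCompact L) (hLcv : Convex ℝ L) :
    (∀ Q : Set (EuclideanSpace ℝ (Fin n)),
      (∃ s : Finset (EuclideanSpace ℝ (Fin n)), s.card ≤ d + 1 ∧ ↑s ⊆ K ∧
        Q = convexHull ℝ (↑s : Set (EuclideanSpace ℝ (Fin n)))) →
      ∃ v : EuclideanSpace ℝ (Fin n), (fun x => x + v) '' Q ⊆ L) ↔
    (∀ ξ : Submodule ℝ (EuclideanSpace ℝ (Fin n)), Module.finrank ℝ ξ = d →
      ∃ v ∈ ξ, (fun x => x + v) '' (projSub ξ '' K) ⊆ projSub ξ '' L) :=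
  stmt_3_general d hdn K L hLcp hLcv
end

section
/- Let T be an n-simplex in ℝⁿ (the convex hull of n+1 affinely independent points), and let Q be a polytope in ℝⁿ having at most n vertices (the convex hull of at most n points). Suppose that for every unit vector u ∈ ℝⁿ there exists v ∈ u^⊥ such that Q_u + v ⊆ T_u, where Q_u and T_u denote the orthogonal projections of Q and T onto the hyperplane u^⊥. Then there exists v₀ ∈ ℝⁿ such that Q + v₀ ⊆ T. -/
/-!
The polytope `Q` has at most `n` vertices while the simplex `T` has `n + 1` barycentric
coordinates, so by pigeonhole one vertex `x₀` of `Q` minimises two coordinates `λ_a`, `λ_b` at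
once. Project along the edge direction `d = p_b - p_a`: the shadow hypothesis gives `v` such that
every vertex of `Q + v` can be pushed along `d` into `T`. Such a push lowers `λ_a`, raises `λ_b`
by the same amount and fixes the other coordinates, so the single push by `λ_a(x₀ + v)` works for
all vertices simultaneously; convexity of `T` then finishes.
-/

open Set

section projHyp

open Submodule

variable {n : ℕ}

theorem projHyp_eq_starProjection (u : EuclideanSpace ℝ (Fin n)) :
    projHyp u = ((span ℝ {u})ᗮ).starProjection := rfl

theorem projHyp_add_of_mem_orthogonal {u v : EuclideanSpace ℝ (Fin n)}
    (hv : v ∈ (span ℝ {u})ᗮ) (x : EuclideanSpace ℝ (Fin n)) :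
    projHyp u (x + v) = projHyp u x + v := by
  rw [projHyp_eq_starProjection, map_add, starProjection_eq_self_iff.mpr hv]

theorem exists_eq_add_smul_of_projHyp_eq {u x y : EuclideanSpace ℝ (Fin n)}
    (h : projHyp u x = projHyp u y) : ∃ t : ℝ, y = x + t • u := by
  have hyx : y - x ∈ span ℝ {u} := by
    rw [← orthogonal_orthogonal (span ℝ {u}), ← starProjection_apply_eq_zero_iff,
      map_sub, ← projHyp_eq_starProjection, h, sub_self]
  obtain ⟨t, ht⟩ := mem_span_singleton.mp hyx
  exact ⟨t, by rw [ht]; abel⟩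

theorem exists_add_add_smul_mem_of_projHyp_subset {u v : EuclideanSpace ℝ (Fin n)}
    {Q T : Set (EuclideanSpace ℝ (Fin n))} (hv : v ∈ (span ℝ {u})ᗮ)
    (hQT : (fun x => x + v) '' (projHyp u '' Q) ⊆ projHyp u '' T) :
    ∀ x ∈ Q, ∃ t : ℝ, x + v + t • u ∈ T := by
  intro x hx
  obtain ⟨y, hyT, hy⟩ := hQT ⟨projHyp u x, ⟨x, hx, rfl⟩, rfl⟩
  obtain ⟨t, rfl⟩ := exists_eq_add_smul_of_projHyp_eq
    ((projHyp_add_of_mem_orthogonal hv x).trans hy.symm)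
  exact ⟨t, hyT⟩

end projHyp

theorem Finset.exists_ne_forall_le_le_of_card_lt {ι α β : Type*} [Fintype ι] [LinearOrder β]
    (f : ι → α → β) {s : Finset α} (hs : s.Nonempty) (hcard : s.card < Fintype.card ι) :
    ∃ a b, a ≠ b ∧ ∃ x₀ ∈ s, ∀ x ∈ s, f a x₀ ≤ f a x ∧ f b x₀ ≤ f b x := by
  choose m hm hmin using fun i => s.exists_min_image (f i) hs
  obtain ⟨a, -, b, -, hab, hm_eq⟩ :=
    Finset.exists_ne_map_eq_of_card_lt_of_maps_to (s := Finset.univ) (t := s)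
      (by simpa using hcard) (fun i _ => hm i)
  exact ⟨a, b, hab, m a, hm a, fun x hx => ⟨hmin a x hx, hm_eq ▸ hmin b x hx⟩⟩

namespace AffineBasis

variable {ι V : Type*} [AddCommGroup V] [Module ℝ V] (B : AffineBasis ι ℝ V)

theorem coord_add (i : ι) (x w : V) :
    B.coord i (x + w) = B.coord i x + (B.coord i).linear w := by
  rw [add_comm x w, ← vadd_eq_add, (B.coord i).map_vadd, vadd_eq_add, add_comm]

theorem coord_add_smul_sub [DecidableEq ι] (i : ι) {a b : ι} (x : V) (t : ℝ) :
    B.coord i (x + t • (B b - B a)) =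
      B.coord i x + t * ((if i = b then 1 else 0) - (if i = a then 1 else 0)) := by
  rw [coord_add, map_smul, ← vsub_eq_sub, (B.coord i).linearMap_vsub, vsub_eq_sub,
    coord_apply, coord_apply, smul_eq_mul]

theorem forall_add_smul_mem_convexHull_of_forall_exists {a b : ι} (hab : a ≠ b) {S : Set V}
    {y₀ : V} (hy₀ : y₀ ∈ S)
    (hmin : ∀ y ∈ S, B.coord a y₀ ≤ B.coord a y ∧ B.coord b y₀ ≤ B.coord b y)
    (hlift : ∀ y ∈ S, ∃ t : ℝ, y + t • (B b - B a) ∈ convexHull ℝ (range B)) :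
    ∀ y ∈ S, y + B.coord a y₀ • (B b - B a) ∈ convexHull ℝ (range B) := by
  classical
  simp only [B.convexHull_eq_nonneg_coord, mem_ofPred_eq, coord_add_smul_sub] at hlift ⊢
  obtain ⟨t₀, ht₀⟩ := hlift y₀ hy₀
  have hsum : 0 ≤ B.coord a y₀ + B.coord b y₀ := by
    have ha := ht₀ a
    have hb := ht₀ b
    simp only [if_pos, if_neg hab, if_neg hab.symm] at ha hb
    linarith
  intro y hy i
  obtain ⟨t, ht⟩ := hlift y hy
  obtain ⟨hya, hyb⟩ := hmin y hy
  by_cases hia : i = a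
  · subst hia
    simp only [if_neg hab, if_pos]
    linarith
  by_cases hib : i = b
  · subst hib
    simp only [if_neg hia, if_pos]
    linarith
  simpa only [if_neg hia, if_neg hib, sub_zero, mul_zero, add_zero] using ht i

end AffineBasis

theorem IsSimplex.exists_affineBasis {n : ℕ} {T : Set (EuclideanSpace ℝ (Fin n))}
    (hT : IsSimplex n T) :
    ∃ B : AffineBasis (Fin (n + 1)) ℝ (EuclideanSpace ℝ (Fin n)), T = convexHull ℝ (range B) := by
  obtain ⟨p, hp, rfl⟩ := hT
  refine ⟨⟨p, hp, ?_⟩, rfl⟩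
  rw [hp.affineSpan_eq_top_iff_card_eq_finrank_add_one]
  simp

theorem stmt_4_general {n : ℕ} (T Q : Set (EuclideanSpace ℝ (Fin n)))
    (hT : IsSimplex n T)
    (hQ : ∃ s : Finset (EuclideanSpace ℝ (Fin n)), s.card ≤ n ∧
      Q = convexHull ℝ (↑s : Set (EuclideanSpace ℝ (Fin n))))
    (h : ∀ u : EuclideanSpace ℝ (Fin n), ‖u‖ = 1 →
      ∃ v ∈ (Submodule.span ℝ {u})ᗮ,
        (fun x => x + v) '' (projHyp u '' Q) ⊆ projHyp u '' T) :
    ∃ v₀ : EuclideanSpace ℝ (Fin n), (fun x => x + v₀) '' Q ⊆ T := by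
  obtain ⟨B, rfl⟩ := hT.exists_affineBasis
  obtain ⟨s, hcard, rfl⟩ := hQ
  rcases s.eq_empty_or_nonempty with rfl | hs
  · exact ⟨0, by simp⟩
  obtain ⟨a, b, hab, x₀, hx₀, hmin⟩ :=
    s.exists_ne_forall_le_le_of_card_lt (fun i => B.coord i) hs (by simpa using hcard)
  set d := B b - B a
  have hd : d ≠ 0 := sub_ne_zero.mpr (B.ind.injective.ne hab.symm)
  obtain ⟨v, hv, hQT⟩ := h _ (norm_smul_inv_norm (𝕜 := ℝ) hd)
  have hlift : ∀ y ∈ (· + v) '' (s : Set _), ∃ t : ℝ, y + t • d ∈ convexHull ℝ (range B) := by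
    rintro _ ⟨x, hx, rfl⟩
    obtain ⟨t, ht⟩ :=
      exists_add_add_smul_mem_of_projHyp_subset hv hQT x (subset_convexHull ℝ _ hx)
    exact ⟨t * ‖d‖⁻¹, by rwa [mul_smul]⟩
  have hmin_translate : ∀ y ∈ (· + v) '' (s : Set _),
      B.coord a (x₀ + v) ≤ B.coord a y ∧ B.coord b (x₀ + v) ≤ B.coord b y := by
    rintro _ ⟨x, hx, rfl⟩
    simp only [B.coord_add]
    exact ⟨by linarith [(hmin x hx).1], by linarith [(hmin x hx).2]⟩
  have hpush := B.forall_add_smul_mem_convexHull_of_forall_exists hab (mem_image_of_mem _ hx₀)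
    hmin_translate hlift
  refine ⟨v + B.coord a (x₀ + v) • d, ?_⟩
  rw [image_subset_iff]
  refine convexHull_min (fun x hx => ?_) ((convex_convexHull ℝ _).translate_preimage_left _)
  simpa [add_assoc] using hpush (x + v) ⟨x, hx, rfl⟩

/-- Shadow covering by a simplex for a polytope with at most n vertices. -/
theorem stmt_4 {n : ℕ} (hn : 1 ≤ n) (T Q : Set (EuclideanSpace ℝ (Fin n)))
    (hT : IsSimplex n T)
    (hQ : ∃ s : Finset (EuclideanSpace ℝ (Fin n)), s.card ≤ n ∧
      Q = convexHull ℝ (↑s : Set (EuclideanSpace ℝ (Fin n))))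
    (h : ∀ u : EuclideanSpace ℝ (Fin n), ‖u‖ = 1 →
      ∃ v ∈ (Submodule.span ℝ {u})ᗮ,
        (fun x => x + v) '' (projHyp u '' Q) ⊆ projHyp u '' T) :
    ∃ v₀ : EuclideanSpace ℝ (Fin n), (fun x => x + v₀) '' Q ⊆ T :=
  stmt_4_general T Q hT hQ h
end

section
/- Let K and L be nonempty compact convex sets in ℝⁿ, n ≥ 2. Suppose that for all points x₀, x₁, x₂ ∈ K there exists v ∈ ℝⁿ such that the convex hull of {x₀, x₁, x₂} translated by v is contained in L (i.e., every triangle inside K can be translated inside L). If K and L have the same mean width, i.e., ∫_{S^{n-1}} h_K(u) du = ∫_{S^{n-1}} h_L(u) du where h_K(v) = sup_{x ∈ K} x·v is the support function and the integral is over the unit sphere with its surface measure, then K and L are translates: there exists v₀ ∈ ℝⁿ with L = K + v₀. -/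
open Set

/-!
Write `h_K` for the support function. For `u₁ + u₂ + u₃ = 0`, translating into `L` the triangle
spanned by maximizers of `⟪·, uᵢ⟫` on `K` gives
`h_K u₁ + h_K u₂ + h_K u₃ ≤ h_L u₁ + h_L u₂ + h_L u₃`; with `u₃ = 0` every width
`h_K u + h_K (-u)` of `K` is at most that of `L`. Equal mean widths make the continuous nonnegative
difference of widths integrate to zero over the sphere, so it vanishes there and hence everywhere
by homogeneity. (The sphere is covered by finitely many caps, each projecting bi-Lipschitz onto
its tangent hyperplane; so its measure is finite and open caps have positive measure.) Then
`h_L - h_K` is odd, and the three-term inequality makes it additive; being continuous it is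
`⟪v₀, ·⟫`, so `h_L = h_{K + v₀}` and `L = K + v₀`.
-/

open MeasureTheory Module Metric
open scoped RealInnerProductSpace Pointwise

section Sphere

variable {E : Type*} [NormedAddCommGroup E] [InnerProductSpace ℝ E]

theorem coe_orthogonalProjectionOnto_add_inner_smul {u : E} (hu : ‖u‖ = 1) (x : E) :
    ((ℝ ∙ u)ᗮ.orthogonalProjectionOnto x : E) + ⟪u, x⟫ • u = x := by
  have := (ℝ ∙ u).starProjection_add_starProjection_orthogonal x
  rw [Submodule.starProjection_singleton, hu] at this
  simpa [add_comm] using this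

theorem norm_sq_eq_norm_orthogonalProjectionOnto_sq_add {u : E} (hu : ‖u‖ = 1) (x : E) :
    ‖x‖ ^ 2 = ‖(ℝ ∙ u)ᗮ.orthogonalProjectionOnto x‖ ^ 2 + ⟪u, x⟫ ^ 2 := by
  have hperp : ⟪((ℝ ∙ u)ᗮ.orthogonalProjectionOnto x : E), u⟫ = 0 :=
    Submodule.mem_orthogonal_singleton_iff_inner_left.1 (Submodule.coe_mem _)
  conv_lhs => rw [← coe_orthogonalProjectionOnto_add_inner_smul hu x]
  rw [norm_add_sq_real, inner_smul_right, hperp, norm_smul, hu, Submodule.norm_coe,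
    Real.norm_eq_abs, mul_one, sq_abs]
  ring

/-- On a cap `{1/2 ≤ ⟪u₀, ·⟫}` of the unit sphere the height `⟪u₀, u⟫ ≥ 1/2` is recovered from the
projection `P u` through `‖P u‖² + ⟪u₀, u⟫² = 1`, with a Lipschitz dependence. -/
theorem norm_sub_le_three_mul_norm_orthogonalProjectionOnto_sub {u₀ u v : E} (hu₀ : ‖u₀‖ = 1)
    (hu : ‖u‖ = 1) (hv : ‖v‖ = 1) (hu₀u : 1 / 2 ≤ ⟪u₀, u⟫) (hu₀v : 1 / 2 ≤ ⟪u₀, v⟫) :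
    ‖u - v‖ ≤
      3 * ‖(ℝ ∙ u₀)ᗮ.orthogonalProjectionOnto u - (ℝ ∙ u₀)ᗮ.orthogonalProjectionOnto v‖ := by
  set P := (ℝ ∙ u₀)ᗮ.orthogonalProjectionOnto
  have hsplit : u - v = ((P u - P v : (ℝ ∙ u₀)ᗮ) : E) + (⟪u₀, u⟫ - ⟪u₀, v⟫) • u₀ := by
    conv_lhs => rw [← coe_orthogonalProjectionOnto_add_inner_smul hu₀ u,
      ← coe_orthogonalProjectionOnto_add_inner_smul hu₀ v]
    rw [Submodule.coe_sub, sub_smul]; abel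
  have hheight : |⟪u₀, u⟫ - ⟪u₀, v⟫| ≤ 2 * ‖P u - P v‖ := by
    have hnu : ‖u‖ ^ 2 = ‖P u‖ ^ 2 + ⟪u₀, u⟫ ^ 2 :=
      norm_sq_eq_norm_orthogonalProjectionOnto_sq_add hu₀ u
    have hnv : ‖v‖ ^ 2 = ‖P v‖ ^ 2 + ⟪u₀, v⟫ ^ 2 :=
      norm_sq_eq_norm_orthogonalProjectionOnto_sq_add hu₀ v
    rw [hu] at hnu; rw [hv] at hnv
    have hPu : ‖P u‖ ≤ 1 := by nlinarith [norm_nonneg (P u)]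
    have hPv : ‖P v‖ ≤ 1 := by nlinarith [norm_nonneg (P v)]
    have hd : |‖P v‖ - ‖P u‖| ≤ ‖P u - P v‖ := by
      rw [norm_sub_rev]; exact abs_norm_sub_norm_le _ _
    have hsq : (⟪u₀, u⟫ - ⟪u₀, v⟫) * (⟪u₀, u⟫ + ⟪u₀, v⟫) =
        (‖P v‖ - ‖P u‖) * (‖P v‖ + ‖P u‖) := by linear_combination hnv - hnu
    have key : |⟪u₀, u⟫ - ⟪u₀, v⟫| * (⟪u₀, u⟫ + ⟪u₀, v⟫) =
        |‖P v‖ - ‖P u‖| * (‖P v‖ + ‖P u‖) := by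
      rw [← abs_of_nonneg (by linarith : 0 ≤ ⟪u₀, u⟫ + ⟪u₀, v⟫),
        ← abs_of_nonneg (by positivity : 0 ≤ ‖P v‖ + ‖P u‖), ← abs_mul, ← abs_mul, hsq]
    nlinarith [abs_nonneg (⟪u₀, u⟫ - ⟪u₀, v⟫), abs_nonneg (‖P v‖ - ‖P u‖)]
  calc ‖u - v‖ ≤ ‖P u - P v‖ + |⟪u₀, u⟫ - ⟪u₀, v⟫| := by
        rw [hsplit]
        refine (norm_add_le _ _).trans ?_
        rw [Submodule.norm_coe, norm_smul, hu₀, mul_one, Real.norm_eq_abs]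
    _ ≤ 3 * ‖P u - P v‖ := by linarith

variable [FiniteDimensional ℝ E] [MeasurableSpace E] [BorelSpace E]

theorem hausdorffMeasure_sphere_inter_cap_lt_top {m : ℕ} (hm : finrank ℝ E = m + 1) {u₀ : E}
    (hu₀ : ‖u₀‖ = 1) : μH[m] (sphere (0 : E) 1 ∩ {u | 1 / 2 ≤ ⟪u₀, u⟫}) < ⊤ := by
  set C := sphere (0 : E) 1 ∩ {u | 1 / 2 ≤ ⟪u₀, u⟫}
  set V := (ℝ ∙ u₀)ᗮ
  have : Fact (finrank ℝ E = m + 1) := ⟨hm⟩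
  have hV : finrank ℝ V = m := Submodule.finrank_orthogonal_span_singleton (by
    rintro rfl; simp at hu₀)
  have hanti : AntilipschitzWith 3 fun x : C => V.orthogonalProjectionOnto x :=
    AntilipschitzWith.of_le_mul_dist fun x y => by
      simp only [Subtype.dist_eq, dist_eq_norm]
      exact norm_sub_le_three_mul_norm_orthogonalProjectionOnto_sub hu₀
        (mem_sphere_zero_iff_norm.1 x.2.1) (mem_sphere_zero_iff_norm.1 y.2.1) x.2.2 y.2.2
  calc μH[m] C = μH[m] (univ : Set C) := by
        rw [← (isometry_subtype_coe (s := C)).hausdorffMeasure_image (Or.inl (Nat.cast_nonneg m)),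
          image_univ, Subtype.range_coe]
    _ ≤ 3 ^ (m : ℝ) * μH[m] (range fun x : C => V.orthogonalProjectionOnto x) := by
        simpa using hanti.le_hausdorffMeasure_image (Nat.cast_nonneg m) univ
    _ ≤ 3 ^ (m : ℝ) * μH[finrank ℝ V] (closedBall (0 : V) 1) := by
        rw [hV]
        gcongr
        rintro _ ⟨x, rfl⟩
        rw [mem_closedBall_zero_iff, ← mem_sphere_zero_iff_norm.1 x.2.1]
        exact V.norm_orthogonalProjectionOnto_apply_le x
    _ < ⊤ := ENNReal.mul_lt_top (by simp) (isCompact_closedBall _ _).measure_lt_top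

theorem hausdorffMeasure_sphere_lt_top {m : ℕ} (hm : finrank ℝ E = m + 1) :
    μH[m] (sphere (0 : E) 1) < ⊤ := by
  obtain ⟨t, ht⟩ := (isCompact_sphere (0 : E) 1).elim_finite_subcover
    (fun u₀ : sphere (0 : E) 1 => {u | 1 / 2 < ⟪(u₀ : E), u⟫})
    (fun u₀ => isOpen_lt continuous_const (continuous_const.inner continuous_id))
    (fun u hu => mem_iUnion.2 ⟨⟨u, hu⟩, by simp [mem_sphere_zero_iff_norm.1 hu]; norm_num⟩)
  calc μH[m] (sphere (0 : E) 1)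
      ≤ μH[m] (⋃ u₀ ∈ t, sphere (0 : E) 1 ∩ {u | 1 / 2 ≤ ⟪(u₀ : E), u⟫}) := by
        refine measure_mono fun u hu => ?_
        obtain ⟨u₀, hu₀t, hu₀⟩ := mem_iUnion₂.1 (ht hu)
        exact mem_iUnion₂.2 ⟨u₀, hu₀t, hu, le_of_lt (α := ℝ) hu₀⟩
    _ < ⊤ := (measure_biUnion_finset_le _ _).trans_lt <| ENNReal.sum_lt_top.2 fun u₀ _ =>
        hausdorffMeasure_sphere_inter_cap_lt_top hm (mem_sphere_zero_iff_norm.1 u₀.2)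

theorem hausdorffMeasure_sphere_inter_open_pos {m : ℕ} (hm : finrank ℝ E = m + 1) {U : Set E}
    (hU : IsOpen U) {u₀ : E} (hu₀ : ‖u₀‖ = 1) (hu₀U : u₀ ∈ U) :
    0 < μH[m] (sphere (0 : E) 1 ∩ U) := by
  have : Fact (finrank ℝ E = m + 1) := ⟨hm⟩
  have hV : finrank ℝ (ℝ ∙ u₀)ᗮ = m := Submodule.finrank_orthogonal_span_singleton (by
    rintro rfl; simp at hu₀)
  set P := (ℝ ∙ u₀)ᗮ.orthogonalProjectionOnto
  -- `lift w` is the point of the hemisphere around `u₀` lying over `w`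
  set lift : (ℝ ∙ u₀)ᗮ → E := fun w => (w : E) + √(1 - ‖w‖ ^ 2) • u₀
  have hlift_cont : Continuous lift := by fun_prop
  have hproj_lift (w : (ℝ ∙ u₀)ᗮ) : P (lift w) = w := by
    simp only [P, lift, map_add, map_smul, Submodule.orthogonalProjectionOnto_mem_subspace_eq_self,
      Submodule.orthogonalProjectionOnto_orthogonalComplement_singleton_eq_zero, smul_zero,
      add_zero]
  have hinner_lift (w : (ℝ ∙ u₀)ᗮ) : ⟪u₀, lift w⟫ = √(1 - ‖w‖ ^ 2) := by
    simp [lift, inner_add_right, real_inner_smul_right, hu₀,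
      Submodule.mem_orthogonal_singleton_iff_inner_right.1 w.2]
  have hlift_mem {w : (ℝ ∙ u₀)ᗮ} (hw : ‖w‖ ≤ 1) : lift w ∈ sphere (0 : E) 1 := by
    have h : ‖lift w‖ ^ 2 = ‖P (lift w)‖ ^ 2 + ⟪u₀, lift w⟫ ^ 2 :=
      norm_sq_eq_norm_orthogonalProjectionOnto_sq_add hu₀ (lift w)
    rw [hproj_lift, hinner_lift, Real.sq_sqrt (by nlinarith [norm_nonneg w])] at h
    rw [mem_sphere_zero_iff_norm, ← pow_left_inj₀ (norm_nonneg _) zero_le_one two_ne_zero, h]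
    ring
  obtain ⟨δ, hδ, hδU⟩ := Metric.mem_nhds_iff.1 <|
    hlift_cont.continuousAt.preimage_mem_nhds (x := 0) (by simpa [lift] using hU.mem_nhds hu₀U)
  have hball : ball 0 (min δ 1) ⊆ P '' (sphere (0 : E) 1 ∩ U) := by
    intro w hw
    have hwδ : w ∈ ball 0 δ := ball_subset_ball (min_le_left δ 1) hw
    have hw1 : ‖w‖ ≤ 1 := (mem_ball_zero_iff.1 hw).le.trans (min_le_right δ 1)
    exact ⟨lift w, ⟨hlift_mem hw1, hδU hwδ⟩, hproj_lift w⟩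
  calc 0 < μH[finrank ℝ (ℝ ∙ u₀)ᗮ] (ball (0 : (ℝ ∙ u₀)ᗮ) (min δ 1)) :=
        isOpen_ball.measure_pos _ (nonempty_ball.2 (lt_min hδ one_pos))
    _ ≤ μH[m] (P '' (sphere (0 : E) 1 ∩ U)) := by
        rw [hV]; exact measure_mono hball
    _ ≤ μH[m] (sphere (0 : E) 1 ∩ U) :=
        hausdorffMeasure_orthogonalProjectionOnto_le _ _ _ (Nat.cast_nonneg m)

theorem eqOn_zero_of_nonneg_of_setIntegral_sphere_eq_zero {m : ℕ} (hm : finrank ℝ E = m + 1)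
    {f : E → ℝ} (hf : Continuous f) (hf₀ : ∀ u ∈ sphere (0 : E) 1, 0 ≤ f u)
    (hint : ∫ u in sphere (0 : E) 1, f u ∂μH[m] = 0) : EqOn f 0 (sphere (0 : E) 1) := by
  have hS : MeasurableSet (sphere (0 : E) 1) := isClosed_sphere.measurableSet
  have hae : f =ᵐ[μH[m].restrict (sphere (0 : E) 1)] 0 :=
    (setIntegral_eq_zero_iff_of_nonneg_ae ((ae_restrict_iff' hS).2 (.of_forall hf₀))
      (hf.continuousOn.integrableOn_of_subset_isCompact (isCompact_sphere 0 1) hS subset_rfl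
        (hausdorffMeasure_sphere_lt_top hm).ne)).1 hint
  intro u hu
  by_contra hfu
  have hU : IsOpen {u | f u ≠ 0} := isOpen_ne_fun hf continuous_const
  have hnull : μH[m] (sphere (0 : E) 1 ∩ {u | f u ≠ 0}) = 0 := by
    rw [inter_comm, ← Measure.restrict_apply hU.measurableSet]
    exact ae_iff.1 hae
  exact (hausdorffMeasure_sphere_inter_open_pos hm hU (mem_sphere_zero_iff_norm.1 hu) hfu).ne'
    hnull

end Sphere

theorem setIntegral_sphere_comp_neg {E : Type*} [NormedAddCommGroup E] [InnerProductSpace ℝ E]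
    [MeasurableSpace E] [BorelSpace E] (d : ℝ) (f : E → ℝ) :
    ∫ u in sphere (0 : E) 1, f (-u) ∂μH[d] = ∫ u in sphere (0 : E) 1, f u ∂μH[d] := by
  have hS : (fun u : E => -u) ⁻¹' sphere 0 1 = sphere 0 1 := by ext; simp
  conv_lhs => rw [← hS]
  exact ((IsometryEquiv.neg E).measurePreserving_hausdorffMeasure d).setIntegral_preimage_emb
    (Homeomorph.neg E).measurableEmbedding f _

theorem eq_zero_of_eqOn_sphere_of_homogeneous {E : Type*} [NormedAddCommGroup E]
    [NormedSpace ℝ E] {g : E → ℝ} (hg : ∀ c : ℝ, 0 ≤ c → ∀ u, g (c • u) = c * g u)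
    (hS : EqOn g 0 (sphere (0 : E) 1)) : g = 0 := by
  funext u
  rcases eq_or_ne u 0 with rfl | hu
  · simpa using hg 0 le_rfl 0
  have hnorm : ‖u‖ ≠ 0 := norm_ne_zero_iff.2 hu
  have hunit : ‖u‖⁻¹ • u ∈ sphere (0 : E) 1 := by
    rw [mem_sphere_zero_iff_norm, norm_smul, norm_inv, norm_norm, inv_mul_cancel₀ hnorm]
  rw [← smul_inv_smul₀ hnorm u, hg _ (norm_nonneg u), hS hunit, Pi.zero_apply, mul_zero,
    Pi.zero_apply]

section SupportFunction

variable {E : Type*} [NormedAddCommGroup E] [InnerProductSpace ℝ E]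

noncomputable def supportFunction (K : Set E) (u : E) : ℝ :=
  sSup ((fun x => ⟪x, u⟫) '' K)

variable {K L : Set E}

theorem IsCompact.bddAbove_image_inner (hK : IsCompact K) (u : E) :
    BddAbove ((fun x => ⟪x, u⟫) '' K) :=
  (hK.image (continuous_id.inner continuous_const)).bddAbove

theorem inner_le_supportFunction (hK : IsCompact K) {x : E} (hx : x ∈ K) (u : E) :
    ⟪x, u⟫ ≤ supportFunction K u :=
  le_csSup (hK.bddAbove_image_inner u) (mem_image_of_mem _ hx)

theorem supportFunction_le (hK : K.Nonempty) {u : E} {c : ℝ} (h : ∀ x ∈ K, ⟪x, u⟫ ≤ c) :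
    supportFunction K u ≤ c :=
  csSup_le (hK.image _) (forall_mem_image.2 h)

theorem exists_inner_eq_supportFunction (hKne : K.Nonempty) (hK : IsCompact K) (u : E) :
    ∃ x ∈ K, ⟪x, u⟫ = supportFunction K u := by
  obtain ⟨x, hx, hmax⟩ := hK.exists_isMaxOn hKne (f := fun x => ⟪x, u⟫)
    (continuous_id.inner continuous_const).continuousOn
  exact ⟨x, hx, le_antisymm (inner_le_supportFunction hK hx u)
    (supportFunction_le hKne fun y hy => hmax hy)⟩

theorem supportFunction_smul (K : Set E) {c : ℝ} (hc : 0 ≤ c) (u : E) :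
    supportFunction K (c • u) = c * supportFunction K u := by
  have : (fun x => ⟪x, c • u⟫) '' K = c • (fun x => ⟪x, u⟫) '' K := by
    rw [← image_smul, image_image]
    simp [real_inner_smul_right]
  rw [supportFunction, this, Real.sSup_smul_of_nonneg hc, smul_eq_mul, supportFunction]

theorem supportFunction_zero (K : Set E) : supportFunction K 0 = 0 := by
  simpa using supportFunction_smul K le_rfl 0

theorem IsCompact.continuous_supportFunction (hK : IsCompact K) :
    Continuous (supportFunction K) :=
  hK.continuous_sSup (f := fun u x => ⟪x, u⟫) (by fun_prop)

theorem supportFunction_image_add_right (hKne : K.Nonempty) (hK : IsCompact K) (v u : E) :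
    supportFunction ((· + v) '' K) u = supportFunction K u + ⟪v, u⟫ := by
  have : (fun x => ⟪x, u⟫) '' ((· + v) '' K) =
      OrderIso.addRight ⟪v, u⟫ '' ((fun x => ⟪x, u⟫) '' K) := by
    simp only [image_image, OrderIso.addRight_apply, inner_add_left]
  rw [supportFunction, this, ← OrderIso.map_csSup' _ (hKne.image _) (hK.bddAbove_image_inner u)]
  rfl

theorem mem_of_forall_inner_le_supportFunction [CompleteSpace E] (hKne : K.Nonempty)
    (hKcl : IsClosed K) (hKcv : Convex ℝ K) {x : E} (h : ∀ u, ⟪x, u⟫ ≤ supportFunction K u) :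
    x ∈ K := by
  by_contra hx
  obtain ⟨f, s, hfK, hfx⟩ := geometric_hahn_banach_closed_point hKcv hKcl hx
  have hf (y : E) : f y = ⟪y, (InnerProductSpace.toDual ℝ E).symm f⟫ := by
    rw [real_inner_comm, InnerProductSpace.toDual_symm_apply]
  have hKs : supportFunction K ((InnerProductSpace.toDual ℝ E).symm f) ≤ s :=
    supportFunction_le hKne fun y hy => (hf y ▸ hfK y hy).le
  linarith [h ((InnerProductSpace.toDual ℝ E).symm f), hf x]

theorem eq_of_supportFunction_eq [CompleteSpace E] (hKne : K.Nonempty) (hK : IsCompact K)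
    (hKcv : Convex ℝ K) (hLne : L.Nonempty) (hL : IsCompact L) (hLcv : Convex ℝ L)
    (h : supportFunction K = supportFunction L) : K = L :=
  Subset.antisymm
    (fun _ hx => mem_of_forall_inner_le_supportFunction hLne hL.isClosed hLcv fun u =>
      h ▸ inner_le_supportFunction hK hx u)
    (fun _ hx => mem_of_forall_inner_le_supportFunction hKne hK.isClosed hKcv fun u =>
      h ▸ inner_le_supportFunction hL hx u)

end SupportFunction

theorem add_eq_of_odd_of_add_add_nonneg {G : Type*} [AddCommGroup G] {φ : G → ℝ}
    (hodd : ∀ u, φ (-u) = -φ u) (h : ∀ u₁ u₂ u₃, u₁ + u₂ + u₃ = 0 → 0 ≤ φ u₁ + φ u₂ + φ u₃)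
    (u v : G) : φ (u + v) = φ u + φ v := by
  have h₁ := h u v (-(u + v)) (by abel)
  have h₂ := h (-u) (-v) (u + v) (by abel)
  simp only [hodd] at h₁ h₂
  linarith

theorem exists_inner_eq_of_continuous_of_map_add {E : Type*} [NormedAddCommGroup E]
    [InnerProductSpace ℝ E] [CompleteSpace E] {φ : E → ℝ} (hφ : Continuous φ)
    (hadd : ∀ u v, φ (u + v) = φ u + φ v) : ∃ v, ∀ u, φ u = ⟪v, u⟫ := by
  let ℓ := (AddMonoidHom.mk' φ hadd).toRealLinearMap hφ
  exact ⟨(InnerProductSpace.toDual ℝ E).symm ℓ, fun u => by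
    rw [InnerProductSpace.toDual_symm_apply]; rfl⟩

section Translates

variable {E : Type*} [NormedAddCommGroup E] [InnerProductSpace ℝ E] {K L : Set E}

theorem supportFunction_add_add_le_of_forall_triangle (hKne : K.Nonempty) (hK : IsCompact K)
    (hL : IsCompact L)
    (htri : ∀ x₀ x₁ x₂ : E, x₀ ∈ K → x₁ ∈ K → x₂ ∈ K →
      ∃ v : E, (fun x => x + v) '' convexHull ℝ {x₀, x₁, x₂} ⊆ L)
    {u₁ u₂ u₃ : E} (hu : u₁ + u₂ + u₃ = 0) :
    supportFunction K u₁ + supportFunction K u₂ + supportFunction K u₃ ≤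
      supportFunction L u₁ + supportFunction L u₂ + supportFunction L u₃ := by
  obtain ⟨x₁, hx₁, hx₁u⟩ := exists_inner_eq_supportFunction hKne hK u₁
  obtain ⟨x₂, hx₂, hx₂u⟩ := exists_inner_eq_supportFunction hKne hK u₂
  obtain ⟨x₃, hx₃, hx₃u⟩ := exists_inner_eq_supportFunction hKne hK u₃
  obtain ⟨v, hv⟩ := htri x₁ x₂ x₃ hx₁ hx₂ hx₃
  have hL (x : E) (hx : x ∈ ({x₁, x₂, x₃} : Set E)) (u : E) :
      ⟪x, u⟫ + ⟪v, u⟫ ≤ supportFunction L u := by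
    rw [← inner_add_left]
    exact inner_le_supportFunction hL (hv (mem_image_of_mem _ (subset_convexHull ℝ _ hx))) u
  have hv₀ : ⟪v, u₁⟫ + ⟪v, u₂⟫ + ⟪v, u₃⟫ = 0 := by
    rw [← inner_add_right, ← inner_add_right, hu, inner_zero_right]
  linarith [hL x₁ (by simp) u₁, hL x₂ (by simp) u₂, hL x₃ (by simp) u₃]

theorem exists_eq_image_add_of_supportFunction_sub_additive [CompleteSpace E]
    (hKne : K.Nonempty) (hK : IsCompact K) (hKcv : Convex ℝ K)
    (hLne : L.Nonempty) (hL : IsCompact L) (hLcv : Convex ℝ L)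
    (hadd : ∀ u v, supportFunction L (u + v) - supportFunction K (u + v) =
      (supportFunction L u - supportFunction K u) + (supportFunction L v - supportFunction K v)) :
    ∃ v₀, L = (fun x => x + v₀) '' K := by
  obtain ⟨v₀, hv₀⟩ := exists_inner_eq_of_continuous_of_map_add
    (hL.continuous_supportFunction.sub hK.continuous_supportFunction) hadd
  refine ⟨v₀, (eq_of_supportFunction_eq (hKne.image _) (hK.image (continuous_add_const v₀))
    ?_ hLne hL hLcv ?_).symm⟩
  · simpa only [add_comm _ v₀] using hKcv.translate v₀
  · funext u
    rw [supportFunction_image_add_right hKne hK, ← hv₀, Pi.sub_apply]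
    ring

variable [FiniteDimensional ℝ E] [MeasurableSpace E] [BorelSpace E]

theorem supportFunction_add_neg_eq_of_le_of_setIntegral_eq {m : ℕ} (hm : finrank ℝ E = m + 1)
    (hK : IsCompact K) (hL : IsCompact L)
    (hle : ∀ u, supportFunction K u + supportFunction K (-u) ≤
      supportFunction L u + supportFunction L (-u))
    (hW : ∫ u in sphere (0 : E) 1, supportFunction K u ∂μH[m] =
      ∫ u in sphere (0 : E) 1, supportFunction L u ∂μH[m]) (u : E) :
    supportFunction K u + supportFunction K (-u) =
      supportFunction L u + supportFunction L (-u) := by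
  have hint {f : E → ℝ} (hf : Continuous f) : IntegrableOn f (sphere (0 : E) 1) μH[m] :=
    hf.continuousOn.integrableOn_of_subset_isCompact (isCompact_sphere 0 1)
      isClosed_sphere.measurableSet subset_rfl (hausdorffMeasure_sphere_lt_top hm).ne
  have hKc := hK.continuous_supportFunction
  have hLc := hL.continuous_supportFunction
  set g : E → ℝ := fun u => (supportFunction L u + supportFunction L (-u)) -
    (supportFunction K u + supportFunction K (-u))
  have hg_int : ∫ u in sphere (0 : E) 1, g u ∂μH[m] = 0 := by
    rw [integral_sub (hint (by fun_prop)) (hint (by fun_prop)), integral_add (hint hLc)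
      (hint (by fun_prop)), integral_add (hint hKc) (hint (by fun_prop)),
      setIntegral_sphere_comp_neg, setIntegral_sphere_comp_neg, hW, sub_self]
  have hg_sphere : EqOn g 0 (sphere (0 : E) 1) :=
    eqOn_zero_of_nonneg_of_setIntegral_sphere_eq_zero hm (by fun_prop)
      (fun u _ => sub_nonneg.2 (hle u)) hg_int
  have hg_homog (c : ℝ) (hc : 0 ≤ c) (u : E) : g (c • u) = c * g u := by
    simp only [g, ← smul_neg, supportFunction_smul _ hc]
    ring
  have hgu : g u = 0 := congrFun (eq_zero_of_eqOn_sphere_of_homogeneous hg_homog hg_sphere) u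
  linarith [hgu]

theorem exists_eq_image_add_of_forall_triangle_of_setIntegral_eq {m : ℕ}
    (hm : finrank ℝ E = m + 1) (hKne : K.Nonempty) (hK : IsCompact K) (hKcv : Convex ℝ K)
    (hLne : L.Nonempty) (hL : IsCompact L) (hLcv : Convex ℝ L)
    (htri : ∀ x₀ x₁ x₂ : E, x₀ ∈ K → x₁ ∈ K → x₂ ∈ K →
      ∃ v : E, (fun x => x + v) '' convexHull ℝ {x₀, x₁, x₂} ⊆ L)
    (hW : ∫ u in sphere (0 : E) 1, supportFunction K u ∂μH[m] =
      ∫ u in sphere (0 : E) 1, supportFunction L u ∂μH[m]) :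
    ∃ v₀, L = (fun x => x + v₀) '' K := by
  have h₃ {u₁ u₂ u₃ : E} (hu : u₁ + u₂ + u₃ = 0) :=
    supportFunction_add_add_le_of_forall_triangle hKne hK hL htri hu
  have hwidth := supportFunction_add_neg_eq_of_le_of_setIntegral_eq hm hK hL
    (fun u => by simpa [supportFunction_zero] using h₃ (u₃ := 0) (by simp : u + -u + 0 = 0))
    hW
  refine exists_eq_image_add_of_supportFunction_sub_additive hKne hK hKcv hLne hL hLcv
    (add_eq_of_odd_of_add_add_nonneg (φ := fun u => supportFunction L u - supportFunction K u)
      (fun u => ?_) fun u₁ u₂ u₃ hu => ?_)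
  · linarith [hwidth u]
  · linarith [h₃ hu]

end Translates

open MeasureTheory in
/-- If every triangle in K translates into L and K, L have equal mean width,
then K and L are translates. -/
theorem stmt_8 {n : ℕ} (hn : 2 ≤ n) (K L : Set (EuclideanSpace ℝ (Fin n)))
    (hKne : K.Nonempty) (hKcp : IsCompact K) (hKcv : Convex ℝ K)
    (hLne : L.Nonempty) (hLcp : IsCompact L) (hLcv : Convex ℝ L)
    (htri : ∀ x₀ x₁ x₂ : EuclideanSpace ℝ (Fin n), x₀ ∈ K → x₁ ∈ K → x₂ ∈ K →
      ∃ v : EuclideanSpace ℝ (Fin n),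
        (fun x => x + v) '' (convexHull ℝ {x₀, x₁, x₂}) ⊆ L)
    (hW : ∫ u in Metric.sphere (0 : EuclideanSpace ℝ (Fin n)) 1,
            sSup ((fun x => (inner ℝ x u : ℝ)) '' K) ∂(μH[(n : ℝ) - 1]) =
          ∫ u in Metric.sphere (0 : EuclideanSpace ℝ (Fin n)) 1,
            sSup ((fun x => (inner ℝ x u : ℝ)) '' L) ∂(μH[(n : ℝ) - 1])) :
    ∃ v₀ : EuclideanSpace ℝ (Fin n), L = (fun x => x + v₀) '' K := by
  obtain ⟨m, rfl⟩ : ∃ m, n = m + 1 := ⟨n - 1, by omega⟩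
  have hdim : ((m + 1 : ℕ) : ℝ) - 1 = m := by push_cast; ring
  rw [hdim] at hW
  exact exists_eq_image_add_of_forall_triangle_of_setIntegral_eq (by simp) hKne hKcp hKcv
    hLne hLcp hLcv htri hW
end

section
/- Let Δ be an n-simplex in ℝⁿ, the convex hull of affinely independent points v₀, …, v_n, and let K ⊆ Δ be a nonempty compact convex set. Suppose that K ∩ F = ∅ for every face F of Δ of dimension at most n-2; that is, for every subset s ⊆ {v₀, …, v_n} with at most n-1 elements, K does not meet the convex hull of s. Then for each unit vector u ∈ ℝⁿ there exists v ∈ u^⊥ such that K_u + v is contained in the relative interior of Δ_u within the hyperplane u^⊥, where K_u and Δ_u denote the orthogonal projections of K and Δ onto u^⊥. -/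
/-!
In barycentric coordinates `λᵢ` of the simplex, moving in direction `u` changes `λᵢ` at the
constant rate `βᵢ = dλᵢ(u)`. A point projects into the relative interior of `Δ_u` as soon as its
line in direction `u` meets the interior of `Δ`, i.e. as soon as some `t` makes every
`λᵢ + t βᵢ` positive; eliminating `t` (Fourier–Motzkin), this means `λᵢ > 0` whenever `βᵢ = 0`
and `-βⱼ λᵢ + βᵢ λⱼ > 0` whenever `βᵢ > 0 > βⱼ`. On `K` at most one coordinate vanishes, so
the second condition holds strictly and survives small translations; the first one fails only
on facets parallel to `u`, and a translation inside `u^⊥` towards the centroid makes all those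
coordinates positive. Compactness of `K` and convexity of the cylinder `int Δ + ℝ u` turn this
pointwise statement into a single translation that works on all of `K`.
-/

open Set

open Filter Topology Pointwise

theorem exists_forall_pos_add_mul {ι : Type*} [Fintype ι] (a β : ι → ℝ)
    (hzero : ∀ i, β i = 0 → 0 < a i)
    (hpair : ∀ i j, 0 < β i → β j < 0 → 0 < -β j * a i + β i * a j) :
    ∃ t : ℝ, ∀ i, 0 < a i + t * β i := by
  classical
  obtain ⟨t, hlo, hhi⟩ := Order.exists_between_finsets
    ((Finset.univ.filter (0 < β ·)).image fun i => -a i / β i)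
    ((Finset.univ.filter (β · < 0)).image fun j => a j / -β j) (by
      simp only [Finset.mem_image, Finset.mem_filter, Finset.mem_univ, true_and]
      rintro _ ⟨i, hi, rfl⟩ _ ⟨j, hj, rfl⟩
      rw [div_lt_div_iff₀ hi (neg_pos.2 hj)]
      nlinarith [hpair i j hi hj])
  refine ⟨t, fun i => ?_⟩
  rcases lt_trichotomy (β i) 0 with hi | hi | hi
  · have := hhi _ (Finset.mem_image_of_mem _ (by simpa using hi))
    rw [lt_div_iff₀ (neg_pos.2 hi)] at this
    linarith
  · simpa [hi] using hzero i hi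
  · have := hlo _ (Finset.mem_image_of_mem _ (by simpa using hi))
    rw [div_lt_iff₀ hi] at this
    linarith

theorem IsCompact.exists_pos_forall_add_smul_mem {E : Type*} [NormedAddCommGroup E]
    [NormedSpace ℝ E] {K W : Set E} {v : E} (hK : IsCompact K)
    (hW : IsOpen W) (hWc : Convex ℝ W) (hKW : K ⊆ closure W)
    (h : ∀ x ∈ K, ∃ ε > (0 : ℝ), x + ε • v ∈ W) : ∃ ε > (0 : ℝ), ∀ x ∈ K, x + ε • v ∈ W := by
  suffices ∀ᶠ δ in 𝓝 (0 : ℝ), ∀ x ∈ K, x ∈ closure W → 0 < δ → x + δ • v ∈ W by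
    obtain ⟨δ, hδ, hδ0⟩ :=
      ((this.filter_mono nhdsWithin_le_nhds).and (self_mem_nhdsWithin (s := Ioi 0))).exists
    exact ⟨δ, hδ0, fun x hx => hδ x hx (hKW hx) hδ0⟩
  refine hK.eventually_forall_of_forall_eventually fun x hx => ?_
  obtain ⟨ε, hε, hxε⟩ := h x hx
  have hopen : IsOpen {p : ℝ × E | p.1 < ε ∧ p.2 + ε • v ∈ W} :=
    (isOpen_lt continuous_fst continuous_const).inter (hW.preimage (by fun_prop))
  filter_upwards [hopen.mem_nhds ⟨hε, hxε⟩] with ⟨δ, y⟩ ⟨hδε, hy⟩ hyW hδ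
  have := hWc.add_smul_mem_interior' hyW (hW.interior_eq.symm ▸ hy)
    ⟨div_pos hδ hε, (div_le_one hε).2 hδε.le⟩
  rwa [hW.interior_eq, smul_smul, div_mul_cancel₀ _ hε.ne'] at this

section Projection

variable {E : Type*} [NormedAddCommGroup E] [InnerProductSpace ℝ E]
  (ξ : Submodule ℝ E) [ξ.HasOrthogonalProjection]

theorem Submodule.starProjection_image_interior_subset_intrinsicInterior (D : Set E) :
    ξ.starProjection '' interior D ⊆ intrinsicInterior ℝ (ξ.starProjection '' D) := by
  rintro _ ⟨x, hx, rfl⟩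
  have hspan : (affineSpan ℝ (ξ.starProjection '' D) : Set E) ⊆ ξ :=
    affineSpan_le (Q := ξ.toAffineSubspace).2 <|
      image_subset_iff.2 fun y _ => ξ.starProjection_apply_mem y
  have hcyl : ∀ z ∈ interior D + (ξᗮ : Set E), z ∈ ξ → z ∈ ξ.starProjection '' D := by
    rintro _ ⟨d, hd, w, hw, rfl⟩ hz
    refine ⟨d, interior_subset hd, ?_⟩
    rw [← Submodule.starProjection_eq_self_iff.2 hz, map_add,
      (ξ.starProjection_apply_eq_zero_iff).2 hw, add_zero]
  rw [mem_intrinsicInterior]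
  refine ⟨⟨_, subset_affineSpan ℝ _ ⟨x, interior_subset hx, rfl⟩⟩, ?_, rfl⟩
  refine interior_maximal
    (fun (z : affineSpan ℝ (ξ.starProjection '' D)) hz => hcyl z hz (hspan z.2))
    (isOpen_interior.add_right.preimage continuous_subtype_val) ?_
  refine ⟨x, hx, ξ.starProjection x - x, ?_, add_sub_cancel _ _⟩
  simpa using ξᗮ.neg_mem (ξ.sub_starProjection_mem_orthogonal x)

theorem Submodule.exists_mem_image_add_subset_intrinsicInterior {D K : Set E} (hD : Convex ℝ D)
    (hK : IsCompact K) (hKD : K ⊆ closure (interior D)) {v : E} (hv : v ∈ ξ)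
    (h : ∀ x ∈ K, ∃ ε > (0 : ℝ), x + ε • v ∈ interior D + (ξᗮ : Set E)) :
    ∃ w ∈ ξ, (fun x => x + w) '' (ξ.starProjection '' K) ⊆
      intrinsicInterior ℝ (ξ.starProjection '' D) := by
  obtain ⟨ε, hε, hεK⟩ := hK.exists_pos_forall_add_smul_mem isOpen_interior.add_right
    (hD.interior.add ξᗮ.convex)
    (hKD.trans (closure_mono (subset_add_left _ (SetLike.mem_coe.2 ξᗮ.zero_mem)))) h
  refine ⟨ε • v, ξ.smul_mem ε hv, ?_⟩
  rintro _ ⟨_, ⟨x, hx, rfl⟩, rfl⟩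
  obtain ⟨d, hd, w, hw, hdw⟩ := hεK x hx
  have hproj : ξ.starProjection x + ε • v = ξ.starProjection d := by
    rw [← Submodule.starProjection_eq_self_iff.2 (ξ.smul_mem ε hv), ← map_add, ← hdw, map_add,
      (ξ.starProjection_apply_eq_zero_iff).2 hw, add_zero]
  show ξ.starProjection x + ε • v ∈ _
  exact hproj ▸ ξ.starProjection_image_interior_subset_intrinsicInterior D ⟨d, hd, rfl⟩

end Projection

namespace AffineBasis

variable {ι V : Type*} [NormedAddCommGroup V] [NormedSpace ℝ V] (b : AffineBasis ι ℝ V)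

theorem coord_add_smul (i : ι) (x v : V) (t : ℝ) :
    b.coord i (x + t • v) = b.coord i x + t * (b.coord i).linear v := by
  rw [add_comm x, ← vadd_eq_add, AffineMap.map_vadd, map_smul, smul_eq_mul, vadd_eq_add, add_comm]

variable [Fintype ι]

theorem exists_linear_coord_ne_zero {u : V} (hu : u ≠ 0) : ∃ i, (b.coord i).linear u ≠ 0 := by
  by_contra! h
  refine hu (b.ext_elem fun i => ?_)
  have := b.coord_add_smul i 0 u 1
  rwa [h i, mul_zero, add_zero, zero_add, one_smul] at this

theorem mem_convexHull_image_of_coord_eq_zero {x : V} (hx : ∀ i, 0 ≤ b.coord i x)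
    {s : Finset ι} (hs : ∀ i ∉ s, b.coord i x = 0) : x ∈ convexHull ℝ (b '' s) := by
  have hsum : ∑ i ∈ s, b.coord i x = 1 := by
    rw [← b.sum_coord_apply_eq_one x]
    exact Finset.sum_subset (Finset.subset_univ s) fun i _ hi => hs i hi
  have hcm : s.centerMass (fun i => b.coord i x) b = x :=
    calc s.centerMass (fun i => b.coord i x) b = ∑ i ∈ s, b.coord i x • b i := by
          rw [Finset.centerMass, hsum, inv_one, one_smul]
      _ = ∑ i, b.coord i x • b i :=
          Finset.sum_subset (Finset.subset_univ s) fun i _ hi => by rw [hs i hi, zero_smul]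
      _ = x := b.linear_combination_coord_eq_self x
  exact hcm ▸ s.centerMass_mem_convexHull (fun i _ => hx i) (hsum ▸ one_pos)
    fun i hi => ⟨i, hi, rfl⟩

theorem convexHull_subset_closure_interior :
    convexHull ℝ (range b) ⊆ closure (interior (convexHull ℝ (range b))) := by
  rw [(convex_convexHull ℝ _).closure_interior_eq_closure_of_nonempty_interior
    ⟨_, b.centroid_mem_interior_convexHull⟩]
  exact subset_closure

theorem exists_add_smul_add_smul_mem_interior_convexHull {x u v : V}
    (hx : ∀ i, 0 ≤ b.coord i x) (hx₂ : ∀ i j, b.coord i x = 0 → b.coord j x = 0 → i = j)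
    (hv : ∀ i, (b.coord i).linear u = 0 → 0 < (b.coord i).linear v) :
    ∃ ε > (0 : ℝ), ∃ t : ℝ, x + ε • v + t • u ∈ interior (convexHull ℝ (range b)) := by
  set β := fun i => (b.coord i).linear u
  have hpair : ∀ᶠ ε in 𝓝 (0 : ℝ), ∀ i j, 0 < β i → β j < 0 →
      0 < -β j * b.coord i (x + ε • v) + β i * b.coord j (x + ε • v) := by
    simp only [eventually_all]
    intro i j hi hj
    have hij : i ≠ j := by rintro rfl; linarith
    have h0 : 0 < -β j * b.coord i x + β i * b.coord j x := by
      rcases (hx i).lt_or_eq with hxi | hxi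
      · nlinarith [hx j]
      rcases (hx j).lt_or_eq with hxj | hxj
      · nlinarith
      exact absurd (hx₂ i j hxi.symm hxj.symm) hij
    refine Tendsto.eventually_const_lt h0 ?_
    simp only [coord_add_smul]
    exact Continuous.tendsto' (by fun_prop) 0 _ (by simp)
  obtain ⟨ε, hε, hε0⟩ :=
    ((hpair.filter_mono nhdsWithin_le_nhds).and (self_mem_nhdsWithin (s := Ioi 0))).exists
  obtain ⟨t, ht⟩ := exists_forall_pos_add_mul (fun i => b.coord i (x + ε • v)) β
    (fun i hi => by rw [coord_add_smul]; nlinarith [hx i, hv i hi, hε0]) hε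
  refine ⟨ε, hε0, t, ?_⟩
  rw [b.interior_convexHull]
  intro i
  rw [coord_add_smul]
  exact ht i

end AffineBasis

theorem AffineBasis.exists_mem_orthogonal_linear_coord_pos {ι V : Type*} [Fintype ι]
    [NormedAddCommGroup V] [InnerProductSpace ℝ V] [FiniteDimensional ℝ V]
    (b : AffineBasis ι ℝ V) {u : V} (hu : u ≠ 0) :
    ∃ v ∈ (ℝ ∙ u)ᗮ, ∀ i, (b.coord i).linear u = 0 → 0 < (b.coord i).linear v := by
  classical
  obtain ⟨i₀, hi₀⟩ := b.exists_linear_coord_ne_zero hu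
  set ξ := (ℝ ∙ u)ᗮ
  set z := Finset.univ.centroid ℝ b -ᵥ b i₀
  refine ⟨ξ.starProjection z, ξ.starProjection_apply_mem z, fun i hi => ?_⟩
  have hne : i ≠ i₀ := by rintro rfl; exact hi₀ hi
  have hproj : (b.coord i).linear (ξ.starProjection z) = (b.coord i).linear z := by
    have hz : z - ξ.starProjection z ∈ ℝ ∙ u := by
      simpa only [ξ, Submodule.orthogonal_orthogonal] using ξ.sub_starProjection_mem_orthogonal z
    obtain ⟨c, hc⟩ := Submodule.mem_span_singleton.1 hz
    have := congrArg (b.coord i).linear hc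
    rw [map_smul, hi, smul_zero, map_sub] at this
    exact (sub_eq_zero.1 this.symm).symm
  have hcentroid := b.centroid_mem_interior_convexHull
  rw [b.interior_convexHull] at hcentroid
  rw [hproj, AffineMap.linearMap_vsub, b.coord_apply_ne hne, vsub_eq_sub, sub_zero]
  exact hcentroid i

theorem stmt_9_general {n : ℕ} (p : Fin (n + 1) → EuclideanSpace ℝ (Fin n))
    (hp : AffineIndependent ℝ p) (Δ : Set (EuclideanSpace ℝ (Fin n)))
    (hΔ : Δ = convexHull ℝ (Set.range p))
    (K : Set (EuclideanSpace ℝ (Fin n)))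
    (hKcp : IsCompact K) (hKΔ : K ⊆ Δ)
    (hface : ∀ s : Finset (Fin (n + 1)), s.card ≤ n - 1 →
      K ∩ convexHull ℝ (p '' ↑s) = ∅) :
    ∀ u : EuclideanSpace ℝ (Fin n), ‖u‖ = 1 →
      ∃ v ∈ (Submodule.span ℝ {u})ᗮ,
        (fun x => x + v) '' (projHyp u '' K) ⊆
          intrinsicInterior ℝ (projHyp u '' Δ) := by
  intro u hu
  obtain ⟨b, rfl⟩ : ∃ b : AffineBasis (Fin (n + 1)) ℝ (EuclideanSpace ℝ (Fin n)), ⇑b = p :=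
    ⟨⟨p, hp, by simp [hp.affineSpan_eq_top_iff_card_eq_finrank_add_one]⟩, rfl⟩
  subst hΔ
  have hK₀ : ∀ x ∈ K, ∀ i, 0 ≤ b.coord i x := fun x hx =>
    (b.convexHull_eq_nonneg_coord ▸ hKΔ hx : x ∈ {x | ∀ i, 0 ≤ b.coord i x})
  have hK₂ : ∀ x ∈ K, ∀ i j, b.coord i x = 0 → b.coord j x = 0 → i = j := by
    intro x hx i j hi hj
    by_contra hij
    refine (hface {i, j}ᶜ ?_).subset
      ⟨hx, b.mem_convexHull_image_of_coord_eq_zero (hK₀ x hx) fun k hk => ?_⟩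
    · rw [Finset.card_compl, Finset.card_pair hij, Fintype.card_fin]
      omega
    · rcases Finset.mem_insert.1 (Finset.notMem_compl.1 hk) with rfl | hk
      · exact hi
      · exact Finset.mem_singleton.1 hk ▸ hj
  have hu₀ : u ≠ 0 := by rintro rfl; simp at hu
  obtain ⟨v, hv, hvcoord⟩ := b.exists_mem_orthogonal_linear_coord_pos hu₀
  refine Submodule.exists_mem_image_add_subset_intrinsicInterior _ (convex_convexHull ℝ _) hKcp
    (hKΔ.trans b.convexHull_subset_closure_interior) hv fun x hx => ?_
  obtain ⟨ε, hε, t, ht⟩ :=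
    b.exists_add_smul_add_smul_mem_interior_convexHull (hK₀ x hx) (hK₂ x hx) hvcoord
  refine ⟨ε, hε, _, ht, -(t • u), ?_, add_neg_cancel_right _ _⟩
  exact neg_mem (Submodule.smul_mem _ _ (Submodule.le_orthogonal_orthogonal _
    (Submodule.mem_span_singleton_self u)))

/-- If K avoids all faces of the simplex Δ of dimension at most n-2, then every
shadow of K translates into the relative interior of the corresponding shadow of Δ. -/
theorem stmt_9 {n : ℕ} (hn : 2 ≤ n) (p : Fin (n + 1) → EuclideanSpace ℝ (Fin n))
    (hp : AffineIndependent ℝ p) (Δ : Set (EuclideanSpace ℝ (Fin n)))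
    (hΔ : Δ = convexHull ℝ (Set.range p))
    (K : Set (EuclideanSpace ℝ (Fin n)))
    (hKne : K.Nonempty) (hKcp : IsCompact K) (hKcv : Convex ℝ K) (hKΔ : K ⊆ Δ)
    (hface : ∀ s : Finset (Fin (n + 1)), s.card ≤ n - 1 →
      K ∩ convexHull ℝ (p '' ↑s) = ∅) :
    ∀ u : EuclideanSpace ℝ (Fin n), ‖u‖ = 1 →
      ∃ v ∈ (Submodule.span ℝ {u})ᗮ,
        (fun x => x + v) '' (projHyp u '' K) ⊆
          intrinsicInterior ℝ (projHyp u '' Δ) :=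
  stmt_9_general p hp Δ hΔ K hKcp hKΔ hface
end

section
/- Let C be a nonempty closed subset of the unit sphere S^{n-1} ⊆ ℝⁿ of the form C = Γ ∩ S^{n-1} for a closed convex cone Γ ⊆ ℝⁿ, and suppose C lies in an open hemisphere, i.e., there exists a unit vector e with e·c > 0 for all c ∈ C. Then there exists a unit vector v ∈ S^{n-1} such that -v ∈ C and v·c ≤ 0 for every c ∈ C (that is, v ∈ (-C) ∩ C*, where C* = {u ∈ S^{n-1} : u·c ≤ 0 for all c ∈ C} is the spherical polar dual of C). -/
/-!
Slice the cone `Γ` by the closed half-space `⟪e, x⟫ ≥ 1`; this is a nonempty closed convex set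
avoiding the origin, so it has a nearest point `p ≠ 0` to the origin, and the variational
inequality of that projection gives `⟪p, x⟫ ≥ ‖p‖²` on the slice. Every `c ∈ C` rescales into the
slice, so `⟪p, c⟫ > 0`, and `v = -p / ‖p‖` works: `-v = p / ‖p‖` lies in `Γ` and on the sphere.
-/

open Set

open scoped RealInnerProductSpace

section

variable {F : Type*} [NormedAddCommGroup F] [InnerProductSpace ℝ F] [CompleteSpace F]

theorem exists_mem_forall_norm_sq_le_inner {K : Set F} (hne : K.Nonempty) (hcl : IsClosed K)
    (hconv : Convex ℝ K) : ∃ p ∈ K, ∀ x ∈ K, ‖p‖ ^ 2 ≤ ⟪p, x⟫ := by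
  obtain ⟨p, hpK, hp⟩ := exists_norm_eq_iInf_of_complete_convex hne hcl.isComplete hconv 0
  refine ⟨p, hpK, fun x hx => ?_⟩
  have hvar := (norm_eq_iInf_iff_real_inner_le_zero hconv hpK).mp hp x hx
  rw [zero_sub, inner_neg_left, inner_sub_right, real_inner_self_eq_norm_sq] at hvar
  linarith

theorem exists_mem_cone_forall_inner_pos {Γ : Set F} (hcl : IsClosed Γ) (hconv : Convex ℝ Γ)
    (hsmul : ∀ x ∈ Γ, ∀ c : ℝ, 0 ≤ c → c • x ∈ Γ) {e : F} (hne : ∃ c ∈ Γ, 0 < ⟪e, c⟫) :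
    ∃ p ∈ Γ, p ≠ 0 ∧ ∀ c ∈ Γ, 0 < ⟪e, c⟫ → 0 < ⟪p, c⟫ := by
  have hrescale : ∀ c ∈ Γ, 0 < ⟪e, c⟫ → ⟪e, c⟫⁻¹ • c ∈ Γ ∩ {x | 1 ≤ ⟪e, x⟫} := fun c hc he =>
    ⟨hsmul c hc _ (inv_nonneg.mpr he.le), by
      simp [real_inner_smul_right, inv_mul_cancel₀ he.ne']⟩
  have hslice_cl : IsClosed (Γ ∩ {x | 1 ≤ ⟪e, x⟫}) :=
    hcl.inter (isClosed_le continuous_const (continuous_const.inner continuous_id))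
  have hslice_conv : Convex ℝ (Γ ∩ {x | 1 ≤ ⟪e, x⟫}) :=
    hconv.inter (convex_halfSpace_ge (innerₛₗ ℝ e).isLinear 1)
  obtain ⟨c₀, hc₀, he₀⟩ := hne
  obtain ⟨p, ⟨hpΓ, hep⟩, hp⟩ :=
    exists_mem_forall_norm_sq_le_inner ⟨_, hrescale c₀ hc₀ he₀⟩ hslice_cl hslice_conv
  have hp0 : p ≠ 0 := by
    rintro rfl
    simp only [mem_ofPred_eq, inner_zero_right] at hep
    linarith
  refine ⟨p, hpΓ, hp0, fun c hc he => ?_⟩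
  have hpc := hp _ (hrescale c hc he)
  rw [real_inner_smul_right] at hpc
  have : 0 < ⟪e, c⟫⁻¹ * ⟪p, c⟫ := lt_of_lt_of_le (by positivity) hpc
  exact pos_of_mul_pos_right this (inv_pos.mpr he).le

end

theorem stmt_11_general {n : ℕ} (C : Set (EuclideanSpace ℝ (Fin n)))
    (hCne : C.Nonempty)
    (hC : ∃ Γ : Set (EuclideanSpace ℝ (Fin n)), IsClosed Γ ∧ Convex ℝ Γ ∧
      (∀ x ∈ Γ, ∀ c : ℝ, 0 ≤ c → c • x ∈ Γ) ∧
      C = Γ ∩ Metric.sphere (0 : EuclideanSpace ℝ (Fin n)) 1)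
    (hhemi : ∃ e : EuclideanSpace ℝ (Fin n), ‖e‖ = 1 ∧ ∀ c ∈ C, (0 : ℝ) < inner ℝ e c) :
    ∃ v : EuclideanSpace ℝ (Fin n), ‖v‖ = 1 ∧ -v ∈ C ∧
      ∀ c ∈ C, (inner ℝ v c : ℝ) ≤ 0 := by
  obtain ⟨Γ, hΓcl, hΓconv, hΓsmul, rfl⟩ := hC
  obtain ⟨e, -, he⟩ := hhemi
  obtain ⟨c₀, hc₀⟩ := hCne
  obtain ⟨p, hpΓ, hp0, hp⟩ :=
    exists_mem_cone_forall_inner_pos hΓcl hΓconv hΓsmul ⟨c₀, hc₀.1, he c₀ hc₀⟩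
  have hunit : ‖‖p‖⁻¹ • p‖ = 1 := norm_smul_inv_norm hp0
  refine ⟨-(‖p‖⁻¹ • p), by rwa [norm_neg], ?_, fun c hc => ?_⟩
  · rw [neg_neg]
    exact ⟨hΓsmul p hpΓ _ (by positivity), by simpa using hunit⟩
  · rw [inner_neg_left, real_inner_smul_left, neg_nonpos]
    exact mul_nonneg (by positivity) (hp c hc.1 (he c hc)).le

/-- A closed spherical convex set C inside an open hemisphere admits a unit vector
v ∈ (-C) ∩ C*. -/
theorem stmt_11 {n : ℕ} (hn : 1 ≤ n) (C : Set (EuclideanSpace ℝ (Fin n)))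
    (hCne : C.Nonempty) (hCcl : IsClosed C)
    (hC : ∃ Γ : Set (EuclideanSpace ℝ (Fin n)), IsClosed Γ ∧ Convex ℝ Γ ∧
      (∀ x ∈ Γ, ∀ c : ℝ, 0 ≤ c → c • x ∈ Γ) ∧
      C = Γ ∩ Metric.sphere (0 : EuclideanSpace ℝ (Fin n)) 1)
    (hhemi : ∃ e : EuclideanSpace ℝ (Fin n), ‖e‖ = 1 ∧ ∀ c ∈ C, (0 : ℝ) < inner ℝ e c) :
    ∃ v : EuclideanSpace ℝ (Fin n), ‖v‖ = 1 ∧ -v ∈ C ∧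
      ∀ c ∈ C, (inner ℝ v c : ℝ) ≤ 0 :=
  stmt_11_general C hCne hC hhemi
end
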